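/- For all m ≥ 0 and n ≥ 1, sum_{j=0}^{m} (-1)^{m+j} Ls(m,j) H_{2n+2j-1} = F̃_n(m+1) · m! · (m+1)!, where Ls(m,j) are the Legendre-Stirling numbers of the first kind, F̃_n are the polynomials defined by F̃_1(z)=1, F̃_{n+1}(z) = z(z+1)F̃_n(z+1) - (z-1)z F̃_n(z), and H_{2k-1} are the Genocchi numbers of the second kind. -/
import Mathlib


/-- `F̃ 1 = 1`, `F̃_{n+1}(z) = z(z+1) F̃_n(z+1) - (z-1)z F̃_n(z)`. -/
def Ftilde : ℕ → ℚ → ℚ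
  | 0, _ => 1
  | 1, _ => 1
  | n + 2, z => z * (z + 1) * Ftilde (n + 1) (z + 1) - (z - 1) * z * Ftilde (n + 1) z

/-- Genocchi numbers of the second kind: `genocchiH n = H_{2n-1} = F̃_n(1)`. -/
def genocchiH (n : ℕ) : ℚ := Ftilde n 1

/-- Legendre-Stirling numbers of the first kind:
`Ls(n+1,j) = Ls(n,j-1) - n(n+1) Ls(n,j)`, `Ls(n,0) = δ_{n,0}`, `Ls(n,j) = 0` for `n < j`. -/
def legendreLs : ℕ → ℕ → ℚ
  | 0, 0 => 1
  | 0, _ + 1 => 0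
  | _ + 1, 0 => 0
  | n + 1, j + 1 => legendreLs n j - (n : ℚ) * ((n : ℚ) + 1) * legendreLs n (j + 1)

lemma legendreLs_eq_zero : ∀ n j : ℕ, n < j → legendreLs n j = 0 := by
  intro n
  induction n with
  | zero =>
    intro j hj
    match j, hj with
    | j + 1, _ => rfl
  | succ n ih =>
    intro j hj
    match j, hj with
    | j + 1, hj =>
      show legendreLs n j - (n : ℚ) * ((n : ℚ) + 1) * legendreLs n (j + 1) = 0
      rw [ih j (by omega), ih (j + 1) (by omega)]
      ring

lemma mul_legendreLs_zero (m : ℕ) : (m : ℚ) * ((m : ℚ) + 1) * legendreLs m 0 = 0 := by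
  cases m with
  | zero => simp
  | succ k =>
    have : legendreLs (k + 1) 0 = 0 := rfl
    rw [this, mul_zero]

lemma Ftilde_rec (n : ℕ) (hn : 1 ≤ n) (z : ℚ) :
    Ftilde (n + 1) z = z * (z + 1) * Ftilde n (z + 1) - (z - 1) * z * Ftilde n z := by
  match n, hn with
  | k + 1, _ => rfl

theorem Ftilde_values_genocchiH (m n : ℕ) (hn : 1 ≤ n) :
    ∑ j ∈ Finset.range (m + 1), (-1) ^ (m + j) * legendreLs m j * genocchiH (n + j) =
      Ftilde n ((m : ℚ) + 1) * (m.factorial : ℚ) * ((m + 1).factorial : ℚ) := by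
  induction m generalizing n with
  | zero =>
    simp [legendreLs, genocchiH, Nat.factorial]
  | succ m ih =>
    -- extended sum for S(m,n)
    have h2 : ∑ j ∈ Finset.range (m + 2), (-1 : ℚ) ^ (m + j) * legendreLs m j * genocchiH (n + j)
        = Ftilde n ((m : ℚ) + 1) * (m.factorial : ℚ) * ((m + 1).factorial : ℚ) := by
      rw [Finset.sum_range_succ, legendreLs_eq_zero m (m + 1) (by omega)]
      rw [ih n hn]; ring
    rw [Finset.sum_range_succ'] at h2
    -- h2 : Σ_{j<m+1} (-1)^(m+(j+1)) Ls m (j+1) H(n+(j+1)) + (-1)^(m+0) Ls m 0 H(n+0) = RHS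
    have hshift : ∑ j ∈ Finset.range (m + 1),
        (-1 : ℚ) ^ (m + (j + 1)) * legendreLs m (j + 1) * genocchiH (n + (j + 1))
        = Ftilde n ((m : ℚ) + 1) * (m.factorial : ℚ) * ((m + 1).factorial : ℚ)
          - (-1 : ℚ) ^ (m + 0) * legendreLs m 0 * genocchiH (n + 0) := by
      linarith [h2]
    rw [Finset.sum_range_succ']
    have h0 : legendreLs (m + 1) 0 = 0 := rfl
    have expand : ∀ j ∈ Finset.range (m + 1),
        (-1 : ℚ) ^ (m + 1 + (j + 1)) * legendreLs (m + 1) (j + 1) * genocchiH (n + (j + 1)) =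
        (-1 : ℚ) ^ (m + j) * legendreLs m j * genocchiH (n + 1 + j)
        + (m : ℚ) * ((m : ℚ) + 1) *
            ((-1 : ℚ) ^ (m + (j + 1)) * legendreLs m (j + 1) * genocchiH (n + (j + 1))) := by
      intro j _
      have hidx : n + (j + 1) = n + 1 + j := by omega
      have hLs : legendreLs (m + 1) (j + 1)
          = legendreLs m j - (m : ℚ) * ((m : ℚ) + 1) * legendreLs m (j + 1) := rfl
      have hp1 : (-1 : ℚ) ^ (m + 1 + (j + 1)) = (-1 : ℚ) ^ (m + j) := by
        rw [show m + 1 + (j + 1) = m + j + 2 by omega, pow_add]; ring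
      have hp2 : (-1 : ℚ) ^ (m + (j + 1)) = -(-1 : ℚ) ^ (m + j) := by
        rw [show m + (j + 1) = m + j + 1 by omega, pow_succ]; ring
      rw [hidx, hLs, hp1, hp2]; ring
    rw [Finset.sum_congr rfl expand, Finset.sum_add_distrib, ← Finset.mul_sum,
      ih (n + 1) (by omega), hshift, h0]
    have hrec := Ftilde_rec n hn ((m : ℚ) + 1)
    have hf1 : ((m + 1).factorial : ℚ) = ((m : ℚ) + 1) * (m.factorial : ℚ) := by
      push_cast [Nat.factorial_succ]; ring
    have hf2 : ((m + 1 + 1).factorial : ℚ) = ((m : ℚ) + 2) * ((m + 1).factorial : ℚ) := by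
      push_cast [Nat.factorial_succ]; ring
    have hm0 := mul_legendreLs_zero m
    push_cast
    rw [show ((m : ℚ) + 1 + 1) = (m : ℚ) + 2 from by ring, hf2, hf1]
    have : Ftilde (n + 1) ((m : ℚ) + 1)
        = ((m : ℚ) + 1) * ((m : ℚ) + 2) * Ftilde n ((m : ℚ) + 2)
          - (m : ℚ) * ((m : ℚ) + 1) * Ftilde n ((m : ℚ) + 1) := by
      rw [hrec]; ring
    rw [this]
    linear_combination (-(-1 : ℚ) ^ (m + 0) * genocchiH (n + 0)) * hm0
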